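/- Let X be an independent set of G containing ker(G) (the unique inclusion-minimal critical independent set). If there is a matching from N(X) into X (a matching saturating all of N(X) using edges between N(X) and X), then X is critical, i.e., d(X) = d_c(G). -/
import Mathlib


open Classical Finset

/-- Neighborhood of a set of vertices: all vertices adjacent to some vertex of `X`. -/
noncomputable def nbhd {V : Type*} (G : SimpleGraph V) [Fintype V] (X : Finset V) : Finset V :=
  Finset.univ.filter (fun v => ∃ x ∈ X, G.Adj x v)

/-- The difference `d(X) = |X| - |N(X)|`. -/
noncomputable def gdiff {V : Type*} (G : SimpleGraph V) [Fintype V] (X : Finset V) : ℤ :=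
  (X.card : ℤ) - ((nbhd G X).card : ℤ)

/-- `X` is an independent set of `G`. -/
def IsIndep {V : Type*} (G : SimpleGraph V) (X : Finset V) : Prop :=
  ∀ x ∈ X, ∀ y ∈ X, ¬ G.Adj x y

/-- The critical difference `d_c(G) = max { d(X) : X ⊆ V(G) }`. -/
noncomputable def critDiff {V : Type*} (G : SimpleGraph V) [Fintype V] : ℤ :=
  Finset.univ.powerset.sup' ⟨∅, Finset.empty_mem_powerset _⟩ (gdiff G)

/-- `X` is a critical set of `G`. -/
noncomputable def IsCritical {V : Type*} (G : SimpleGraph V) [Fintype V] (X : Finset V) : Prop :=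
  gdiff G X = critDiff G

/-- `ker G` : the intersection of all critical sets of `G`. -/
noncomputable def kerG {V : Type*} (G : SimpleGraph V) [Fintype V] : Finset V :=
  Finset.univ.filter (fun v => ∀ X : Finset V, IsCritical G X → v ∈ X)

/-- `diadem G` : the union of all critical independent sets of `G`. -/
noncomputable def diademG {V : Type*} (G : SimpleGraph V) [Fintype V] : Finset V :=
  Finset.univ.filter (fun v => ∃ X : Finset V, IsCritical G X ∧ IsIndep G X ∧ v ∈ X)

/-- The independence number `α(G)`. -/
noncomputable def alphaG {V : Type*} (G : SimpleGraph V) [Fintype V] : ℕ :=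
  (Finset.univ.powerset.filter (IsIndep G)).sup Finset.card

/-- `core G` : the intersection of all maximum independent sets of `G`. -/
noncomputable def coreG {V : Type*} (G : SimpleGraph V) [Fintype V] : Finset V :=
  Finset.univ.filter (fun v => ∀ I : Finset V, IsIndep G I → I.card = alphaG G → v ∈ I)

/-- `M` is a matching of `G`, given as a finite set of pairwise disjoint edges of `G`. -/
def IsMatchingF {V : Type*} (G : SimpleGraph V) (M : Finset (Sym2 V)) : Prop :=
  (↑M : Set (Sym2 V)) ⊆ G.edgeSet ∧
    ∀ e₁ ∈ M, ∀ e₂ ∈ M, e₁ ≠ e₂ → ∀ v : V, v ∈ e₁ → v ∉ e₂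

/-- The matching number `μ(G)`. -/
noncomputable def matchNum {V : Type*} (G : SimpleGraph V) [Fintype V] : ℕ :=
  ((Finset.univ : Finset (Finset (Sym2 V))).filter (IsMatchingF G)).sup Finset.card

/-- There is a matching from `A` into `B`: an injection of `A` into `B` along edges of `G`. -/
def MatchingFromInto {V : Type*} (G : SimpleGraph V) (A B : Finset V) : Prop :=
  ∃ f : V → V, Set.InjOn f ↑A ∧ ∀ a ∈ A, f a ∈ B ∧ G.Adj a (f a)

/-- The auxiliary bipartite graph `H_X` on vertex set `X ∪ N(X) ∪ {v, w}`, where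
`v = Sum.inr false` and `w = Sum.inr true`.  Its edges are the edges of `G` between
`X` and `N(X)`, the edge `vw`, and all edges from `v` to `N(X)`. -/
noncomputable def HX {V : Type*} (G : SimpleGraph V) [Fintype V] (X : Finset V) :
    SimpleGraph ({a : V // a ∈ X ∪ nbhd G X} ⊕ Bool) :=
  SimpleGraph.fromRel (fun p q =>
    match p, q with
    | Sum.inl a, Sum.inl b => a.1 ∈ X ∧ b.1 ∈ nbhd G X ∧ G.Adj a.1 b.1
    | Sum.inr false, Sum.inr true => True
    | Sum.inr false, Sum.inl b => b.1 ∈ nbhd G X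
    | _, _ => False)

/-- The copy of `X` inside the vertex set of `H_X`. -/
noncomputable def Xlift {V : Type*} (G : SimpleGraph V) [Fintype V] (X : Finset V) :
    Finset ({a : V // a ∈ X ∪ nbhd G X} ⊕ Bool) :=
  Finset.univ.filter (fun p => ∃ a : {a : V // a ∈ X ∪ nbhd G X}, p = Sum.inl a ∧ a.1 ∈ X)

/-- Edmonds–Gallai set `D`: vertices missed by some maximum matching. -/
noncomputable def gallaiD {V : Type*} (G : SimpleGraph V) [Fintype V] : Finset V :=
  Finset.univ.filter (fun v => ∃ M : Finset (Sym2 V),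
    IsMatchingF G M ∧ M.card = matchNum G ∧ ∀ e ∈ M, v ∉ e)

/-- Edmonds–Gallai set `A = N(D) - D`. -/
noncomputable def gallaiA {V : Type*} (G : SimpleGraph V) [Fintype V] : Finset V :=
  nbhd G (gallaiD G) \ gallaiD G

/-- Edmonds–Gallai set `C = V - A - D`. -/
noncomputable def gallaiC {V : Type*} (G : SimpleGraph V) [Fintype V] : Finset V :=
  (Finset.univ \ gallaiD G) \ gallaiA G

/-- The vertices of the singleton components of `G[D]`. -/
noncomputable def singlesD {V : Type*} (G : SimpleGraph V) [Fintype V] : Finset V :=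
  (gallaiD G).filter (fun v => ∀ w ∈ gallaiD G, ¬ G.Adj v w)


section AuxStmt8

variable {V : Type*} (G : SimpleGraph V) [Fintype V] [DecidableEq V]

lemma nbhd_mono {A B : Finset V} (h : A ⊆ B) : nbhd G A ⊆ nbhd G B := by
  intro v hv
  simp only [nbhd, Finset.mem_filter, Finset.mem_univ, true_and] at *
  obtain ⟨x, hx, hadj⟩ := hv
  exact ⟨x, h hx, hadj⟩

lemma nbhd_union (A B : Finset V) : nbhd G (A ∪ B) = nbhd G A ∪ nbhd G B := by
  ext v
  simp only [nbhd, Finset.mem_filter, Finset.mem_univ, true_and, Finset.mem_union]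
  constructor
  · rintro ⟨x, hx | hx, hadj⟩
    · exact Or.inl ⟨x, hx, hadj⟩
    · exact Or.inr ⟨x, hx, hadj⟩
  · rintro (⟨x, hx, hadj⟩ | ⟨x, hx, hadj⟩)
    · exact ⟨x, Or.inl hx, hadj⟩
    · exact ⟨x, Or.inr hx, hadj⟩

lemma gdiff_le_critDiff (A : Finset V) : gdiff G A ≤ critDiff G :=
  Finset.le_sup' _ (Finset.mem_powerset.2 (Finset.subset_univ A))

lemma exists_critical : ∃ A : Finset V, IsCritical G A := by
  obtain ⟨A, _, h⟩ :=
    Finset.exists_mem_eq_sup' (⟨∅, Finset.empty_mem_powerset _⟩ :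
      (Finset.univ.powerset (α := V)).Nonempty) (gdiff G)
  exact ⟨A, h.symm⟩

lemma inter_critical {A B : Finset V} (hA : IsCritical G A) (hB : IsCritical G B) :
    IsCritical G (A ∩ B) := by
  have h1 : nbhd G (A ∩ B) ⊆ nbhd G A ∩ nbhd G B :=
    Finset.subset_inter (nbhd_mono G Finset.inter_subset_left)
      (nbhd_mono G Finset.inter_subset_right)
  have hcard : (nbhd G (A ∩ B)).card ≤ (nbhd G A ∩ nbhd G B).card := Finset.card_le_card h1
  have hcu : (A ∪ B).card + (A ∩ B).card = A.card + B.card := Finset.card_union_add_card_inter A B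
  have hnu : (nbhd G (A ∪ B)).card + (nbhd G A ∩ nbhd G B).card
      = (nbhd G A).card + (nbhd G B).card := by
    rw [nbhd_union]; exact Finset.card_union_add_card_inter _ _
  have hsum : gdiff G A + gdiff G B ≤ gdiff G (A ∪ B) + gdiff G (A ∩ B) := by
    unfold gdiff
    push_cast
    omega
  have h3 := gdiff_le_critDiff G (A ∪ B)
  have h4 := gdiff_le_critDiff G (A ∩ B)
  unfold IsCritical at *
  omega

lemma ker_critical : IsCritical G (kerG G) := by
  classical
  set S := (Finset.univ.powerset (α := V)).filter (IsCritical G) with hS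
  have hne : S.Nonempty := by
    obtain ⟨A, hA⟩ := exists_critical G
    exact ⟨A, by simp [hS, hA]⟩
  have hmemS : ∀ A : Finset V, A ∈ S ↔ IsCritical G A := by
    intro A; simp [hS]
  have hkereq : kerG G = S.inf' hne id := by
    ext v
    simp only [kerG, Finset.mem_filter, Finset.mem_univ, true_and]
    constructor
    · intro h
      have : ({v} : Finset V) ≤ S.inf' hne id :=
        Finset.le_inf' hne id (fun A hA =>
          Finset.singleton_subset_iff.2 (h A ((hmemS A).1 hA)))
      exact Finset.singleton_subset_iff.1 this
    · intro h A hcrit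
      have hAS : A ∈ S := (hmemS A).2 hcrit
      exact (Finset.inf'_le id hAS : S.inf' ⟨A, hAS⟩ id ≤ A) h
  rw [hkereq]
  exact Finset.inf'_induction hne id
    (fun A hA B hB => by
      have : (A ⊓ B : Finset V) = A ∩ B := rfl
      rw [this]; exact inter_critical G hA hB)
    (fun A hA => (hmemS A).1 hA)

end AuxStmt8

/-- an independent set containing `ker G` with a matching from `N(X)`
into `X` is critical. -/
theorem stmt8 {V : Type*} (G : SimpleGraph V) [Fintype V] [DecidableEq V] [DecidableRel G.Adj]
    (X : Finset V) (hind : IsIndep G X) (hker : kerG G ⊆ X)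
    (hmatch : MatchingFromInto G (nbhd G X) X) :
    gdiff G X = critDiff G := by
  classical
  obtain ⟨f, hfin, hf⟩ := hmatch
  have hKcrit : gdiff G (kerG G) = critDiff G := ker_critical G
  set K := kerG G with hK
  have hNK : nbhd G K ⊆ nbhd G X := nbhd_mono G hker
  have hmaps : ∀ u ∈ nbhd G X \ nbhd G K, f u ∈ X \ K := by
    intro u hu
    rw [Finset.mem_sdiff] at hu
    obtain ⟨h1, h2⟩ := hu
    obtain ⟨hfx, hadj⟩ := hf u h1
    refine Finset.mem_sdiff.2 ⟨hfx, fun hmemK => h2 ?_⟩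
    simp only [nbhd, Finset.mem_filter, Finset.mem_univ, true_and]
    exact ⟨f u, hmemK, hadj.symm⟩
  have hcard : (nbhd G X \ nbhd G K).card ≤ (X \ K).card :=
    Finset.card_le_card_of_injOn f hmaps
      (hfin.mono (Finset.coe_subset.2 Finset.sdiff_subset))
  have h1 : (nbhd G X \ nbhd G K).card = (nbhd G X).card - (nbhd G K).card :=
    Finset.card_sdiff_of_subset hNK
  have h2 : (X \ K).card = X.card - K.card := Finset.card_sdiff_of_subset hker
  have h3 : (nbhd G K).card ≤ (nbhd G X).card := Finset.card_le_card hNK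
  have h4 : K.card ≤ X.card := Finset.card_le_card hker
  have hge : gdiff G K ≤ gdiff G X := by
    unfold gdiff
    omega
  have hle := gdiff_le_critDiff G X
  omega
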